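/- arXiv:1002.3131 — 2 statements merged into one kernel-verified Lean document; each statement's English description precedes it below -/
import Mathlib

section
/- Let E be a type, At : E → Set A, and for each j ∈ {1,…,k} let t_j : E → E and τ_j : A → A be injective maps such that At(t_j(x)) = τ_j '' At(x) for all x, the images τ_j '' A are pairwise disjoint for distinct j, and every At(x) for x in a given finite set S is nonempty. Then the bridge-equivalence classes (generated by overlapping atom sets) of the set ⋃_{j=1}^k t_j '' S are exactly the sets t_j '' 𝔟, where j ∈ {1,…,k} and 𝔟 ranges over the bridge-equivalence classes of S. -/
/-! Atoms of different copies lie in the disjoint ranges of different `τ j`, so atom sets of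
elements from different copies never overlap; within the `j`-th copy, `τ j` is injective, so
`t j x` and `t j y` overlap exactly when `x` and `y` do. Hence `t j` carries the bridge
relation of `S` isomorphically onto that of the `j`-th copy, and no chain leaves a copy. -/

/-- One step of the bridge relation on `D₀`: both elements are in `D₀`
and their atom sets overlap. -/
def bridgeStep {E A : Type*} (At : E → Set A) (D₀ : Set E) (x y : E) : Prop :=
  x ∈ D₀ ∧ y ∈ D₀ ∧ (At x ∩ At y).Nonempty

/-- The bridge relation: finite chains inside `D₀` of elements with
pairwise-overlapping atom sets. -/
def Bridge {E A : Type*} (At : E → Set A) (D₀ : Set E) : E → E → Prop :=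
  Relation.ReflTransGen (bridgeStep At D₀)

/-- The bridge-equivalence classes of `D₀`. -/
def bridgeClasses {E A : Type*} (At : E → Set A) (D₀ : Set E) : Set (Set E) :=
  {C | ∃ α ∈ D₀, C = {β | Bridge At D₀ α β}}

lemma Bridge.mem_right {E A : Type*} {At : E → Set A} {D₀ : Set E} {x y : E}
    (h : Bridge At D₀ x y) (hx : x ∈ D₀) : y ∈ D₀ := by
  induction h with
  | refl => exact hx
  | tail _ step _ => exact step.2.1

section Copies

variable {E A ι : Type*} {At : E → Set A} {t : ι → E → E} {τ : ι → A → A}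

lemma atoms_copy_inter_nonempty_iff (hτ : ∀ j, Function.Injective (τ j))
    (hAt : ∀ j x, At (t j x) = τ j '' At x) (j : ι) (x y : E) :
    (At (t j x) ∩ At (t j y)).Nonempty ↔ (At x ∩ At y).Nonempty := by
  rw [hAt, hAt, ← Set.image_inter (hτ j), Set.image_nonempty]

lemma eq_of_atoms_copy_inter_nonempty (hAt : ∀ j x, At (t j x) = τ j '' At x)
    (hdisj : ∀ j j', j ≠ j' → Set.range (τ j) ∩ Set.range (τ j') = ∅) {j j' : ι} {x y : E}
    (h : (At (t j x) ∩ At (t j' y)).Nonempty) : j = j' := by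
  by_contra hne
  obtain ⟨a, hax, hay⟩ := h
  rw [hAt] at hax hay
  have ha : a ∈ Set.range (τ j) ∩ Set.range (τ j') :=
    ⟨Set.image_subset_range _ _ hax, Set.image_subset_range _ _ hay⟩
  rwa [hdisj j j' hne] at ha

variable (hτ : ∀ j, Function.Injective (τ j)) (hAt : ∀ j x, At (t j x) = τ j '' At x)
  {S : Set E}
include hτ hAt

lemma Bridge.copy {x y : E} (j : ι) (h : Bridge At S x y) :
    Bridge At (⋃ i, t i '' S) (t j x) (t j y) :=
  h.lift (t j) fun _ _ ⟨hx, hy, hxy⟩ ↦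
    ⟨Set.mem_iUnion_of_mem j (Set.mem_image_of_mem _ hx),
      Set.mem_iUnion_of_mem j (Set.mem_image_of_mem _ hy),
      (atoms_copy_inter_nonempty_iff hτ hAt j _ _).2 hxy⟩

lemma Bridge.exists_eq_copy
    (hdisj : ∀ j j', j ≠ j' → Set.range (τ j) ∩ Set.range (τ j') = ∅)
    {x β : E} (j : ι) (hx : x ∈ S) (h : Bridge At (⋃ i, t i '' S) (t j x) β) :
    ∃ y, Bridge At S x y ∧ β = t j y := by
  induction h with
  | refl => exact ⟨x, .refl, rfl⟩
  | tail _ step ih =>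
    obtain ⟨y, hxy, rfl⟩ := ih
    obtain ⟨-, hz, hyz⟩ := step
    obtain ⟨j', z, hzS, rfl⟩ := Set.mem_iUnion.1 hz
    obtain rfl := eq_of_atoms_copy_inter_nonempty hAt hdisj hyz
    exact ⟨z, hxy.tail ⟨hxy.mem_right hx, hzS,
      (atoms_copy_inter_nonempty_iff hτ hAt j _ _).1 hyz⟩, rfl⟩

lemma setOf_bridge_copy
    (hdisj : ∀ j j', j ≠ j' → Set.range (τ j) ∩ Set.range (τ j') = ∅)
    {x : E} (j : ι) (hx : x ∈ S) :
    {β | Bridge At (⋃ i, t i '' S) (t j x) β} = t j '' {y | Bridge At S x y} := by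
  ext β
  constructor
  · intro h
    obtain ⟨y, hxy, rfl⟩ := Bridge.exists_eq_copy hτ hAt hdisj j hx h
    exact ⟨y, hxy, rfl⟩
  · rintro ⟨y, hxy, rfl⟩
    exact hxy.copy hτ hAt j

end Copies

theorem stmt5_general {E A : Type*} (At : E → Set A) (k : ℕ) (S : Set E)
    (t : Fin k → E → E) (τ : Fin k → A → A)
    (hτ : ∀ j, Function.Injective (τ j))
    (hAt : ∀ j x, At (t j x) = τ j '' At x)
    (hdisj : ∀ j j' : Fin k, j ≠ j' → Set.range (τ j) ∩ Set.range (τ j') = ∅) :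
    bridgeClasses At (⋃ j, t j '' S)
      = {C | ∃ j : Fin k, ∃ 𝔟 ∈ bridgeClasses At S, C = t j '' 𝔟} := by
  ext C
  constructor
  · rintro ⟨α, hα, rfl⟩
    obtain ⟨j, x, hx, rfl⟩ := Set.mem_iUnion.1 hα
    exact ⟨j, _, ⟨x, hx, rfl⟩, setOf_bridge_copy hτ hAt hdisj j hx⟩
  · rintro ⟨j, _, ⟨x, hx, rfl⟩, rfl⟩
    exact ⟨t j x, Set.mem_iUnion_of_mem j (Set.mem_image_of_mem _ hx),
      (setOf_bridge_copy hτ hAt hdisj j hx).symm⟩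

/-- Taking `k` disjointly-renamed copies of a (finite, atom-nonempty) set `S`
multiplies its bridge components by `k`: the bridge classes of `⋃_j t_j '' S`
are exactly the sets `t_j '' 𝔟` for `j ∈ [k]` and `𝔟` a bridge class of `S`. -/
theorem stmt5 {E A : Type*} (At : E → Set A) (k : ℕ) (S : Set E) (hS : S.Finite)
    (t : Fin k → E → E) (τ : Fin k → A → A)
    (ht : ∀ j, Function.Injective (t j)) (hτ : ∀ j, Function.Injective (τ j))
    (hAt : ∀ j x, At (t j x) = τ j '' At x)
    (hdisj : ∀ j j' : Fin k, j ≠ j' → Set.range (τ j) ∩ Set.range (τ j') = ∅)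
    (hne : ∀ x ∈ S, (At x).Nonempty) :
    bridgeClasses At (⋃ j, t j '' S)
      = {C | ∃ j : Fin k, ∃ 𝔟 ∈ bridgeClasses At S, C = t j '' 𝔟} :=
  stmt5_general At k S t τ hτ hAt hdisj
end

section
/- Let k, n ∈ ℕ with k ≥ 1. Let b₁, …, b_n, b'₁, …, b'_n be finite multisets of points all of whose elements have nonempty atom sets, and suppose the atoms occurring in distinct copies are disjoint: the renamings t̂_1, …, t̂_k (homomorphic extensions to points of injections t_j : A → A with pairwise disjoint images) are used to form dig_1^k(b_i) = ∑_{j=1}^k map(t̂_j) b_i. If there exists a partial injection ρ of atoms with ρ · dig_1^k(b_i) = dig_1^k(b'_i) for every i ∈ {1,…,n}, then there exists a partial injection τ of atoms with τ · b_i = b'_i for every i ∈ {1,…,n}. -/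
inductive Pt (A : Type) : Type where
  | atom : A → Pt A
  | star : Bool → Pt A
  | pair : Bool → Pt A → Pt A → Pt A
  | bag  : Bool → List (Pt A) → Pt A

namespace Pt

variable {A : Type}

/-- The homomorphic extension to points of a map on atoms. -/
def rename (t : A → A) : Pt A → Pt A
  | .atom γ => .atom (t γ)
  | .star ι => .star ι
  | .pair ι a b => .pair ι (rename t a) (rename t b)
  | .bag ι l => .bag ι (l.attach.map (fun x => rename t x.1))
decreasing_by
  all_goals first
    | (simp; omega)
    | (have := List.sizeOf_lt_of_mem x.2; simp; omega)
    | simp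

/-- The set of atoms occurring in a point. -/
def At : Pt A → Set A
  | .atom γ => {γ}
  | .star _ => ∅
  | .pair _ a b => At a ∪ At b
  | .bag _ l => ⋃ x ∈ l.attach, At x.1
decreasing_by
  all_goals first
    | (simp; omega)
    | (have := List.sizeOf_lt_of_mem x.2; simp; omega)
    | simp

/-- The set of atoms occurring in a finite multiset of points. -/
def AtM (b : Multiset (Pt A)) : Set A :=
  ⋃ α ∈ b, At α

/-- `dig_1^k`: the sum of the `k` renamed copies of `b`. -/
def dig (k : ℕ) (t : Fin k → A → A) (b : Multiset (Pt A)) : Multiset (Pt A) :=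
  ∑ j : Fin k, b.map (rename (t j))

end Pt

/-!
The partial injection relating the `dig`s is first extended to a permutation `σ` of the atoms.
Call two atoms linked when some point contains both; the classes of the equivalence this
generates are the components of a tuple of multisets of points. The components of `dig k t b`
are exactly the copies `t j '' C` of the components `C` of `b`, and `σ` maps components onto
components, so it induces a bijection `components b × Fin k ≃ components b' × Fin k` sending
each copy of `C` to a copy of some `C'` on which `b` and `b'` restrict to isomorphic tuples.
Read as a `k`-regular bipartite multigraph between the components of `b` and of `b'`, this
bijection contains a perfect matching by Hall's theorem, and gluing the isomorphisms along the
matching gives `τ`.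
-/

open Function Set

theorem Function.injective_uncurry_of_range_inter_eq_empty {ι α β : Type*} {t : ι → α → β}
    (ht : ∀ j, Injective (t j))
    (hdisj : ∀ j j', j ≠ j' → range (t j) ∩ range (t j') = ∅) :
    Injective (uncurry t) := by
  rintro ⟨j, x⟩ ⟨j', y⟩ h
  obtain rfl : j = j' := by_contra fun hj => (hdisj j j' hj).subset ⟨⟨x, rfl⟩, y, h.symm⟩
  exact congrArg _ (ht j h)

theorem Function.Injective.eq_and_eq_of_uncurry {ι α β : Type*} {t : ι → α → β}
    (ht : Injective (uncurry t)) {j j' : ι} {x y : α} (h : t j x = t j' y) : j = j' ∧ x = y :=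
  Prod.mk.inj (@ht (j, x) (j', y) h)

theorem Function.Injective.of_uncurry {ι α β : Type*} {t : ι → α → β}
    (ht : Injective (uncurry t)) (j : ι) : Injective (t j) :=
  fun _ _ h => (ht.eq_and_eq_of_uncurry h).2

theorem Multiset.map_finsetSum {ι α β : Type*} (f : α → β) (s : Finset ι)
    (g : ι → Multiset α) : (∑ i ∈ s, g i).map f = ∑ i ∈ s, (g i).map f :=
  map_sum (mapAddMonoidHom f) g s

theorem Multiset.filter_finsetSum {ι α : Type*} (p : α → Prop) [DecidablePred p]
    (s : Finset ι) (f : ι → Multiset α) :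
    (∑ i ∈ s, f i).filter p = ∑ i ∈ s, (f i).filter p :=
  map_sum (⟨⟨filter p, filter_zero p⟩, filter_add p⟩ : Multiset α →+ Multiset α) f s

theorem Multiset.sum_filter_eq_self {ι α : Type*} [Fintype ι] (s : Multiset α)
    (p : ι → α → Prop) [∀ i, DecidablePred (p i)] (h : ∀ x ∈ s, ∃! i, p i x) :
    ∑ i, s.filter (p i) = s := by
  classical
  ext x
  rw [Multiset.count_sum']
  by_cases hx : x ∈ s
  · obtain ⟨i, hi, hunique⟩ := h x hx
    rw [Finset.sum_eq_single i (fun j _ hj => count_filter_of_neg fun hpj => hj (hunique j hpj))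
      (by simp), count_filter_of_pos hi]
  · simp [hx]

theorem Set.InjOn.exists_perm_eqOn {α : Type*} {f : α → α} {s : Set α} (hs : s.Finite)
    (hf : InjOn f s) : ∃ σ : Equiv.Perm α, EqOn σ f s := by
  have : Finite s := hs
  let e : s ↪ α := ⟨s.domRestrict f, hf.injective⟩
  obtain ⟨σ, hσ⟩ : ∃ σ : α ≃ α, ∀ x : s, σ x = e x := by
    cases finite_or_infinite α
    · exact Cardinal.extend_function_finite e ⟨Equiv.refl α⟩
    · exact Cardinal.extend_function_of_lt e
        ((Cardinal.lt_aleph0_of_finite s).trans_le (Cardinal.aleph0_le_mk α)) ⟨Equiv.refl α⟩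
  exact ⟨σ, fun x hx => hσ ⟨x, hx⟩⟩

theorem exists_equiv_apply_eq_of_range_eq {X Y Z : Type*} {Φ : X → Z} {Ψ : Y → Z}
    (hΦ : Injective Φ) (hΨ : Injective Ψ) (h : range Φ = range Ψ) :
    ∃ e : X ≃ Y, ∀ x, Ψ (e x) = Φ x :=
  ⟨(Equiv.ofInjective Φ hΦ).trans ((Equiv.setCongr h).trans (Equiv.ofInjective Ψ hΨ).symm),
    fun x => by simp [Equiv.apply_ofInjective_symm]⟩

/-- Hall's theorem for the `k`-regular bipartite multigraph with an edge from `a` to `(e (a, j)).1`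
for every `j`. -/
theorem Equiv.exists_equiv_of_prod_fin {α β : Type*} [Finite α] [Finite β] {k : ℕ}
    (hk : k ≠ 0) (e : α × Fin k ≃ β × Fin k) :
    ∃ M : α ≃ β, ∀ a, ∃ j, (e (a, j)).1 = M a := by
  classical
  have := Fintype.ofFinite α
  have := Fintype.ofFinite β
  have hall (s : Finset α) :
      s.card ≤ (Finset.univ.filter fun b => ∃ a ∈ s, ∃ j, (e (a, j)).1 = b).card := by
    have hsub : (s ×ˢ Finset.univ).map e.toEmbedding ⊆
        (Finset.univ.filter fun b => ∃ a ∈ s, ∃ j, (e (a, j)).1 = b) ×ˢ Finset.univ := by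
      intro q hq
      obtain ⟨⟨a, j⟩, hp, rfl⟩ := Finset.mem_map.1 hq
      simp only [Finset.mem_product, Finset.mem_univ, and_true] at hp
      simpa using ⟨a, hp, j, rfl⟩
    have := Finset.card_le_card hsub
    rw [Finset.card_map, Finset.card_product, Finset.card_product] at this
    exact Nat.le_of_mul_le_mul_right this (by simpa using Nat.pos_of_ne_zero hk)
  obtain ⟨M, hM, hMe⟩ := (Fintype.all_card_le_filter_rel_iff_exists_injective _).1 hall
  have hcard : Fintype.card α = Fintype.card β := by
    have := Fintype.card_congr e
    rw [Fintype.card_prod, Fintype.card_prod] at this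
    exact Nat.eq_of_mul_eq_mul_right (by simpa using Nat.pos_of_ne_zero hk) this
  exact ⟨.ofBijective M ((Fintype.bijective_iff_injective_and_card M).2 ⟨hM, hcard⟩), hMe⟩

namespace Pt

variable {A : Type}

@[elab_as_elim]
theorem induction_on {motive : Pt A → Prop} (p : Pt A) (atom : ∀ γ, motive (.atom γ))
    (star : ∀ ι, motive (.star ι))
    (pair : ∀ ι p q, motive p → motive q → motive (.pair ι p q))
    (bag : ∀ ι l, (∀ p ∈ l, motive p) → motive (.bag ι l)) : motive p :=
  match p with
  | .atom γ => atom γ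
  | .star ι => star ι
  | .pair ι p q =>
    pair ι p q (induction_on p atom star pair bag) (induction_on q atom star pair bag)
  | .bag ι l => bag ι l fun p _ => induction_on p atom star pair bag

@[simp] theorem rename_atom (u : A → A) (γ : A) : rename u (.atom γ) = .atom (u γ) := by
  rw [rename]

@[simp] theorem rename_star (u : A → A) (ι : Bool) : rename u (.star ι) = .star ι := by
  rw [rename]

@[simp] theorem rename_pair (u : A → A) (ι : Bool) (p q : Pt A) :
    rename u (.pair ι p q) = .pair ι (rename u p) (rename u q) := by
  rw [rename]

@[simp] theorem rename_bag (u : A → A) (ι : Bool) (l : List (Pt A)) :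
    rename u (.bag ι l) = .bag ι (l.map (rename u)) := by
  rw [rename, List.attach_map_val]

@[simp] theorem At_atom (γ : A) : At (.atom γ : Pt A) = {γ} := by rw [At]

@[simp] theorem At_star (ι : Bool) : At (.star ι : Pt A) = ∅ := by rw [At]

@[simp] theorem At_pair (ι : Bool) (p q : Pt A) : At (.pair ι p q) = At p ∪ At q := by rw [At]

@[simp] theorem At_bag (ι : Bool) (l : List (Pt A)) : At (.bag ι l) = ⋃ p ∈ l, At p := by
  rw [At]
  ext
  simp

theorem At_finite (p : Pt A) : (At p).Finite := by
  induction p using induction_on with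
  | atom γ => simp
  | star ι => simp
  | pair ι p q hp hq => simpa using hp.union hq
  | bag ι l ih => simpa using l.finite_toSet.biUnion ih

theorem At_rename (u : A → A) (p : Pt A) : At (rename u p) = u '' At p := by
  induction p using induction_on with
  | atom γ => simp
  | star ι => simp
  | pair ι p q hp hq => simp [hp, hq, image_union]
  | bag ι l ih => simpa [image_iUnion₂] using iUnion₂_congr ih

theorem rename_congr {u v : A → A} (p : Pt A) (h : ∀ a ∈ At p, u a = v a) :
    rename u p = rename v p := by
  induction p using induction_on with
  | atom γ => simpa using h
  | star ι => simp
  | pair ι p q hp hq =>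
    simp only [At_pair, mem_union] at h
    simp [hp fun a ha => h a (.inl ha), hq fun a ha => h a (.inr ha)]
  | bag ι l ih =>
    simp only [At_bag, mem_iUnion] at h
    simpa using List.map_congr_left fun p hp => ih p hp fun a ha => h a ⟨p, hp, ha⟩

theorem rename_rename (u v : A → A) (p : Pt A) : rename u (rename v p) = rename (u ∘ v) p := by
  induction p using induction_on with
  | atom γ => simp
  | star ι => simp
  | pair ι p q hp hq => simp [hp, hq]
  | bag ι l ih => simpa using List.map_congr_left ih

theorem rename_id (p : Pt A) : rename id p = p := by
  induction p using induction_on with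
  | atom γ => simp
  | star ι => simp
  | pair ι p q hp hq => simp [hp, hq]
  | bag ι l ih => simpa using List.map_congr_left ih

theorem rename_injective {u : A → A} (hu : Injective u) : Injective (rename u) := by
  cases isEmpty_or_nonempty A
  · have : rename u = id :=
      funext fun p => (rename_congr p fun a => isEmptyElim a).trans (rename_id p)
    exact this ▸ injective_id
  · refine LeftInverse.injective (g := rename (invFun u)) fun p => ?_
    rw [rename_rename, invFun_comp hu, rename_id]

theorem mem_AtM {m : Multiset (Pt A)} {a : A} : a ∈ AtM m ↔ ∃ α ∈ m, a ∈ At α := by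
  simp [AtM]

theorem AtM_map_rename (u : A → A) (m : Multiset (Pt A)) :
    AtM (m.map (rename u)) = u '' AtM m := by
  simp only [AtM, Multiset.mem_map, iUnion_exists, biUnion_and', iUnion_iUnion_eq_right,
    At_rename, image_iUnion₂]

theorem mem_dig {k : ℕ} {t : Fin k → A → A} {m : Multiset (Pt A)} {π : Pt A} :
    π ∈ dig k t m ↔ ∃ j, ∃ α ∈ m, rename (t j) α = π := by
  simp [dig, Multiset.mem_sum]

theorem AtM_dig (k : ℕ) (t : Fin k → A → A) (m : Multiset (Pt A)) :
    AtM (dig k t m) = ⋃ j, t j '' AtM m := by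
  simp_rw [← AtM_map_rename]
  ext a
  simp only [mem_AtM, dig, Multiset.mem_sum, Finset.mem_univ, true_and, mem_iUnion]
  tauto

section Components

variable {ι : Type*}

def atoms (b : ι → Multiset (Pt A)) : Set A :=
  ⋃ i, AtM (b i)

theorem mem_atoms {b : ι → Multiset (Pt A)} {a : A} :
    a ∈ atoms b ↔ ∃ i, ∃ α ∈ b i, a ∈ At α := by
  simp [atoms, mem_AtM]

theorem atoms_finite [Finite ι] (b : ι → Multiset (Pt A)) : (atoms b).Finite :=
  finite_iUnion fun i => (b i).finite_toSet.biUnion fun α _ => At_finite α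

theorem atoms_map_rename (u : A → A) (b : ι → Multiset (Pt A)) :
    atoms (fun i => (b i).map (rename u)) = u '' atoms b := by
  simp [atoms, AtM_map_rename, image_iUnion]

theorem atoms_dig (k : ℕ) (t : Fin k → A → A) (b : ι → Multiset (Pt A)) :
    atoms (fun i => dig k t (b i)) = ⋃ j, t j '' atoms b := by
  simp only [atoms, AtM_dig, image_iUnion]
  exact iUnion_comm _

def Linked (b : ι → Multiset (Pt A)) (x y : A) : Prop :=
  ∃ i, ∃ α ∈ b i, x ∈ At α ∧ y ∈ At α

instance (b : ι → Multiset (Pt A)) : Std.Symm (Linked b) where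
  symm _ _ := fun ⟨i, α, hα, hx, hy⟩ => ⟨i, α, hα, hy, hx⟩

def component (b : ι → Multiset (Pt A)) (a : A) : Set A :=
  {x | Relation.ReflTransGen (Linked b) a x}

def components (b : ι → Multiset (Pt A)) : Set (Set A) :=
  component b '' atoms b

variable {b : ι → Multiset (Pt A)}

theorem mem_component_self (b : ι → Multiset (Pt A)) (a : A) : a ∈ component b a :=
  Relation.ReflTransGen.refl

theorem component_subset_of_closed {S : Set A} {a : A} (ha : a ∈ S)
    (hS : ∀ x ∈ S, ∀ y, Linked b x y → y ∈ S) : component b a ⊆ S := fun _ hx => by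
  induction hx with
  | refl => exact ha
  | tail _ hxy ih => exact hS _ ih _ hxy

theorem component_subset_atoms {a : A} (ha : a ∈ atoms b) : component b a ⊆ atoms b :=
  component_subset_of_closed ha fun _ _ _ ⟨i, α, hα, _, hy⟩ =>
    mem_atoms.2 ⟨i, α, hα, hy⟩

theorem At_subset_component {i : ι} {α : Pt A} (hα : α ∈ b i) {a : A} (ha : a ∈ At α) :
    At α ⊆ component b a := fun _ hx => .single ⟨i, α, hα, ha, hx⟩

theorem component_eq_of_mem {a x : A} (hx : x ∈ component b a) :
    component b x = component b a := by
  ext y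
  exact ⟨hx.trans, fun hy => (Std.Symm.symm _ _ hx).trans hy⟩

theorem eq_of_mem_components {C C' : Set A} (hC : C ∈ components b) (hC' : C' ∈ components b)
    {x : A} (hx : x ∈ C) (hx' : x ∈ C') : C = C' := by
  obtain ⟨a, -, rfl⟩ := hC
  obtain ⟨a', -, rfl⟩ := hC'
  rw [← component_eq_of_mem hx, component_eq_of_mem hx']

theorem nonempty_of_mem_components {C : Set A} (hC : C ∈ components b) : C.Nonempty := by
  obtain ⟨a, -, rfl⟩ := hC
  exact ⟨a, mem_component_self b a⟩

instance [Finite ι] (b : ι → Multiset (Pt A)) : Finite (components b) :=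
  ((atoms_finite b).image _).to_subtype

end Components

section Transport

variable {ι : Type*} {b b' : ι → Multiset (Pt A)} {k : ℕ} {t : Fin k → A → A}
  {u : A → A}

theorem Linked.map_rename {x y : A} (h : Linked b x y) (u : A → A) :
    Linked (fun i => (b i).map (rename u)) (u x) (u y) :=
  let ⟨i, α, hα, hx, hy⟩ := h
  ⟨i, rename u α, Multiset.mem_map_of_mem _ hα, At_rename u α ▸ mem_image_of_mem u hx,
    At_rename u α ▸ mem_image_of_mem u hy⟩

theorem Linked.dig {x y : A} (h : Linked b x y) (j : Fin k) :
    Linked (fun i => dig k t (b i)) (t j x) (t j y) :=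
  let ⟨i, α, hα, hx, hy⟩ := h.map_rename (t j)
  ⟨i, α, Multiset.mem_sum.2 ⟨j, Finset.mem_univ j, hα⟩, hx, hy⟩

theorem component_map_rename (hu : Injective u) (b : ι → Multiset (Pt A)) (a : A) :
    component (fun i => (b i).map (rename u)) (u a) = u '' component b a := by
  refine Subset.antisymm (component_subset_of_closed (mem_image_of_mem u (mem_component_self b a))
    ?_) ?_
  · rintro _ ⟨x, hx, rfl⟩ z ⟨i, β, hβ, hxβ, hz⟩
    obtain ⟨α, hα, rfl⟩ := Multiset.mem_map.1 hβ
    rw [At_rename, hu.mem_set_image] at hxβ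
    obtain ⟨y, hy, rfl⟩ := (At_rename u α ▸ hz : z ∈ u '' At α)
    exact mem_image_of_mem u (hx.tail ⟨i, α, hα, hxβ, hy⟩)
  · rintro _ ⟨x, hx, rfl⟩
    exact Relation.ReflTransGen.lift u (fun _ _ h => h.map_rename u) _ _ hx

theorem component_dig (ht : Injective (uncurry t)) (b : ι → Multiset (Pt A)) (j : Fin k)
    (a : A) : component (fun i => dig k t (b i)) (t j a) = t j '' component b a := by
  refine Subset.antisymm (component_subset_of_closed (mem_image_of_mem _ (mem_component_self b a))
    ?_) ?_
  · rintro _ ⟨x, hx, rfl⟩ z ⟨i, π, hπ, hxπ, hz⟩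
    obtain ⟨j', α, hα, rfl⟩ := mem_dig.1 hπ
    rw [At_rename] at hxπ hz
    obtain ⟨x', hx', hxx'⟩ := hxπ
    obtain ⟨rfl, rfl⟩ := ht.eq_and_eq_of_uncurry hxx'
    obtain ⟨y, hy, rfl⟩ := hz
    exact mem_image_of_mem _ (hx.tail ⟨i, α, hα, hx', hy⟩)
  · rintro _ ⟨x, hx, rfl⟩
    exact Relation.ReflTransGen.lift (t j) (fun _ _ h => h.dig j) _ _ hx

theorem components_map_rename (hu : Injective u) (b : ι → Multiset (Pt A)) :
    components (fun i => (b i).map (rename u)) = image u '' components b := by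
  simp only [components, atoms_map_rename, image_image, component_map_rename hu]

theorem components_dig (ht : Injective (uncurry t)) (b : ι → Multiset (Pt A)) :
    components (fun i => dig k t (b i)) =
      range fun p : components b × Fin k => t p.2 '' p.1 := by
  ext S
  simp only [components, atoms_dig, mem_image, mem_iUnion, mem_range, Prod.exists,
    Subtype.exists]
  constructor
  · rintro ⟨_, ⟨j, a, ha, rfl⟩, rfl⟩
    exact ⟨_, ⟨a, ha, rfl⟩, j, (component_dig ht b j a).symm⟩
  · rintro ⟨_, ⟨a, ha, rfl⟩, j, rfl⟩
    exact ⟨t j a, ⟨j, a, ha, rfl⟩, component_dig ht b j a⟩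

theorem injective_image_components (ht : Injective (uncurry t)) (b : ι → Multiset (Pt A)) :
    Injective fun p : components b × Fin k => t p.2 '' p.1 := by
  rintro ⟨C, j⟩ ⟨C', j'⟩ h
  obtain ⟨x, hx⟩ := nonempty_of_mem_components C.2
  obtain ⟨y, -, hxy⟩ := h.le (mem_image_of_mem (t j) hx)
  obtain ⟨rfl, -⟩ := ht.eq_and_eq_of_uncurry hxy
  exact Prod.ext (Subtype.ext (image_injective.2 (ht.of_uncurry _) h)) rfl

theorem exists_equiv_components_prod (ht : Injective (uncurry t)) (hu : Injective u)
    (hub : ∀ i, (dig k t (b i)).map (rename u) = dig k t (b' i)) :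
    ∃ φ : components b × Fin k ≃ components b' × Fin k,
      ∀ p, t (φ p).2 '' (φ p).1 = u '' (t p.2 '' p.1) := by
  refine exists_equiv_apply_eq_of_range_eq
    ((image_injective.2 hu).comp (injective_image_components ht b))
    (injective_image_components ht b') ?_
  rw [range_comp, ← components_dig ht, ← components_dig ht, ← components_map_rename hu]
  simp only [hub]

open scoped Classical

theorem filter_map_rename_subset_image (hu : Injective u) (m : Multiset (Pt A)) (S : Set A) :
    (m.map (rename u)).filter (At · ⊆ u '' S) = (m.filter (At · ⊆ S)).map (rename u) := by
  simp only [Multiset.filter_map, comp_def, At_rename, image_subset_image_iff hu]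

theorem filter_dig_subset_image (ht : Injective (uncurry t)) {m : Multiset (Pt A)}
    (hm : ∀ α ∈ m, (At α).Nonempty) (j : Fin k) (S : Set A) :
    (dig k t m).filter (At · ⊆ t j '' S) = (m.filter (At · ⊆ S)).map (rename (t j)) := by
  rw [dig, Multiset.filter_finsetSum, Finset.sum_eq_single j _ (by simp),
    filter_map_rename_subset_image (ht.of_uncurry j)]
  intro j' _ hj'
  refine Multiset.filter_eq_nil.2 fun π hπ hsub => hj' ?_
  obtain ⟨α, hα, rfl⟩ := Multiset.mem_map.1 hπ
  obtain ⟨x, hx⟩ := hm α hα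
  obtain ⟨y, -, hxy⟩ := hsub (At_rename (t j') α ▸ mem_image_of_mem _ hx)
  exact (ht.eq_and_eq_of_uncurry hxy).1.symm

theorem sum_filter_components [Fintype (components b)] {i : ι}
    (hb : ∀ α ∈ b i, (At α).Nonempty) :
    ∑ C : components b, (b i).filter (At · ⊆ C) = b i := by
  refine Multiset.sum_filter_eq_self _ _ fun α hα => ?_
  obtain ⟨a, ha⟩ := hb α hα
  have hC₀ : component b a ∈ components b := ⟨a, mem_atoms.2 ⟨i, α, hα, ha⟩, rfl⟩
  exact ⟨⟨_, hC₀⟩, At_subset_component hα ha, fun C hC =>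
    Subtype.ext (eq_of_mem_components C.2 hC₀ (hC ha) (mem_component_self b a))⟩

theorem exists_rename_filter_of_image_eq (ht : Injective (uncurry t)) (hu : Injective u)
    (hub : ∀ i, (dig k t (b i)).map (rename u) = dig k t (b' i))
    (hb : ∀ i, ∀ α ∈ b i, (At α).Nonempty) (hb' : ∀ i, ∀ α ∈ b' i, (At α).Nonempty)
    {C C' : Set A} {j j' : Fin k} (hCC' : u '' (t j '' C) = t j' '' C') :
    ∃ g : A → A, InjOn g C ∧ MapsTo g C C' ∧
      ∀ i, ((b i).filter (At · ⊆ C)).map (rename g) = (b' i).filter (At · ⊆ C') := by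
  have key (a : A) (ha : a ∈ C) : ∃ a' ∈ C', t j' a' = u (t j a) := by
    rw [← mem_image, ← hCC']
    exact mem_image_of_mem u (mem_image_of_mem (t j) ha)
  let g a := if h : ∃ a' ∈ C', t j' a' = u (t j a) then h.choose else a
  have hg (a : A) (ha : a ∈ C) : g a ∈ C' ∧ t j' (g a) = u (t j a) := by
    simp only [g, dif_pos (key a ha)]
    exact (key a ha).choose_spec
  refine ⟨g, fun a ha a' ha' h => ?_, fun a ha => (hg a ha).1, fun i => ?_⟩
  · have := (hg a ha).2.symm.trans ((congrArg (t j') h).trans (hg a' ha').2)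
    exact ht.of_uncurry j (hu this)
  · refine Multiset.map_injective (rename_injective (ht.of_uncurry j')) ?_
    calc (((b i).filter (At · ⊆ C)).map (rename g)).map (rename (t j'))
        = (((b i).filter (At · ⊆ C)).map (rename (t j))).map (rename u) := by
          simp only [Multiset.map_map]
          refine Multiset.map_congr rfl fun α hα => ?_
          simp only [comp_apply, rename_rename]
          exact rename_congr α fun a ha => (hg a ((Multiset.mem_filter.1 hα).2 ha)).2
      _ = ((dig k t (b' i)).filter (At · ⊆ t j' '' C')) := by
          rw [← filter_dig_subset_image ht (hb i), ← filter_map_rename_subset_image hu, hub,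
            hCC']
      _ = ((b' i).filter (At · ⊆ C')).map (rename (t j')) :=
          filter_dig_subset_image ht (hb' i) j' C'

theorem exists_rename_of_componentwise [Finite ι]
    (hb : ∀ i, ∀ α ∈ b i, (At α).Nonempty) (hb' : ∀ i, ∀ α ∈ b' i, (At α).Nonempty)
    (M : components b ≃ components b') (g : components b → A → A)
    (hg : ∀ C, InjOn (g C) C) (hgM : ∀ C, MapsTo (g C) C (M C))
    (hgb : ∀ (C : components b) i,
      ((b i).filter (At · ⊆ C)).map (rename (g C)) = (b' i).filter (At · ⊆ M C)) :
    ∃ τ : A → A, InjOn τ (atoms b) ∧ ∀ i, (b i).map (rename τ) = b' i := by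
  have := Fintype.ofFinite (components b)
  have := Fintype.ofFinite (components b')
  let κ (a : A) (ha : a ∈ atoms b) : components b := ⟨component b a, a, ha, rfl⟩
  let τ a := if h : a ∈ atoms b then g (κ a h) a else a
  have hτ (C : components b) (a : A) (ha : a ∈ (C : Set A)) : τ a = g C a := by
    obtain ⟨_, a₀, ha₀, rfl⟩ := C
    have haX : a ∈ atoms b := component_subset_atoms ha₀ ha
    have hκ : κ a haX = ⟨_, a₀, ha₀, rfl⟩ := Subtype.ext (component_eq_of_mem ha)
    simp only [τ, dif_pos haX, hκ]
  refine ⟨τ, fun a ha a' ha' h => ?_, fun i => ?_⟩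
  · have hmem (a : A) (ha : a ∈ atoms b) : a ∈ (κ a ha : Set A) := mem_component_self b a
    rw [hτ _ a (hmem a ha), hτ _ a' (hmem a' ha')] at h
    have hM : M (κ a ha) = M (κ a' ha') := Subtype.ext <| eq_of_mem_components (M _).2 (M _).2
      (hgM _ (hmem a ha)) (h ▸ hgM _ (hmem a' ha'))
    have hC : κ a ha = κ a' ha' := M.injective hM
    rw [hC] at h
    exact hg _ (hC ▸ hmem a ha) (hmem a' ha') h
  · calc (b i).map (rename τ)
        = ∑ C : components b, ((b i).filter (At · ⊆ C)).map (rename τ) := by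
          rw [← Multiset.map_finsetSum, sum_filter_components (hb i)]
      _ = ∑ C : components b, ((b i).filter (At · ⊆ C)).map (rename (g C)) :=
          Finset.sum_congr rfl fun C _ => Multiset.map_congr rfl fun α hα =>
            rename_congr α fun a ha => hτ C a ((Multiset.mem_filter.1 hα).2 ha)
      _ = ∑ C' : components b', (b' i).filter (At · ⊆ C') := by
          simp only [hgb]
          exact M.sum_comp fun C' => (b' i).filter (At · ⊆ C')
      _ = b' i := sum_filter_components (hb' i)

theorem exists_rename_of_map_rename_dig [Finite ι] (hk : k ≠ 0) (ht : Injective (uncurry t))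
    (hu : Injective u) (hub : ∀ i, (dig k t (b i)).map (rename u) = dig k t (b' i))
    (hb : ∀ i, ∀ α ∈ b i, (At α).Nonempty) (hb' : ∀ i, ∀ α ∈ b' i, (At α).Nonempty) :
    ∃ τ : A → A, InjOn τ (atoms b) ∧ ∀ i, (b i).map (rename τ) = b' i := by
  obtain ⟨φ, hφ⟩ := exists_equiv_components_prod ht hu hub
  obtain ⟨M, hM⟩ := Equiv.exists_equiv_of_prod_fin hk φ
  choose j hj using hM
  have hCM (C : components b) : u '' (t (j C) '' C) = t (φ (C, j C)).2 '' M C := by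
    rw [← hj C, hφ]
  choose g hg hgM hgb using fun C => exists_rename_filter_of_image_eq ht hu hub hb hb' (hCM C)
  exact exists_rename_of_componentwise hb hb' M g hg hgM hgb

end Transport

/-- If the `dig_1^k`s (built from injective renamings with pairwise disjoint
ranges) of two tuples of multisets of atom-nonempty points are related by a
partial injection of atoms, then so are the tuples themselves. -/
theorem stmt15 (k n : ℕ) (hk : 1 ≤ k)
    (t : Fin k → A → A) (ht : ∀ j, Function.Injective (t j))
    (hdisj : ∀ j j' : Fin k, j ≠ j' → Set.range (t j) ∩ Set.range (t j') = ∅)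
    (b b' : Fin n → Multiset (Pt A))
    (hb : ∀ i, ∀ α ∈ b i, (At α).Nonempty)
    (hb' : ∀ i, ∀ α ∈ b' i, (At α).Nonempty)
    (hρ : ∃ (f : A → A) (dom : Set A), Set.InjOn f dom ∧
      (∀ i, AtM (dig k t (b i)) ⊆ dom) ∧
      ∀ i, (dig k t (b i)).map (rename f) = dig k t (b' i)) :
    ∃ (g : A → A) (dom' : Set A), Set.InjOn g dom' ∧
      (∀ i, AtM (b i) ⊆ dom') ∧ ∀ i, (b i).map (rename g) = b' i := by
  obtain ⟨f, dom, hf, hdom, hfb⟩ := hρ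
  obtain ⟨σ, hσ⟩ := (hf.mono (iUnion_subset hdom)).exists_perm_eqOn (atoms_finite _)
  have hσb (i : Fin n) : (dig k t (b i)).map (rename σ) = dig k t (b' i) := by
    rw [← hfb i]
    exact Multiset.map_congr rfl fun π hπ =>
      rename_congr π fun a ha => hσ (mem_atoms.2 ⟨i, π, hπ, ha⟩)
  obtain ⟨τ, hτ, hτb⟩ := exists_rename_of_map_rename_dig (by omega)
    (injective_uncurry_of_range_inter_eq_empty ht hdisj) σ.injective hσb hb hb'
  exact ⟨τ, atoms b, hτ, subset_iUnion (fun i => AtM (b i)), hτb⟩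

end Pt
end
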